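/- arXiv:math/0605045 — 2 statements merged into one kernel-verified Lean document; each statement's English description precedes it below -/
import Mathlib

section
/- For every λ ∈ a and every x ∈ a, G_λ(x) ≤ G_0(x) · e^{max_{w∈W} (wλ, x)}, where G_0 is the Opdam function with parameter 0. -/
open scoped BigOperators RealInnerProductSpace Classical

noncomputable section

variable {E : Type*} [NormedAddCommGroup E] [InnerProductSpace ℝ E] [FiniteDimensional ℝ E]

/-- The coroot `α∨ = 2α/|α|²`. -/
def coroot (α : E) : E := (2 / ⟪α, α⟫) • α

/-- The orthogonal reflection `r_α x = x - (α∨, x) α`. -/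
def rRefl (α : E) (x : E) : E := x - ⟪coroot α, x⟫ • α

/-- Data of an integral root system with positive subsystem and
a Weyl-invariant positive multiplicity function. -/
structure HOData (E : Type*) [NormedAddCommGroup E] [InnerProductSpace ℝ E] : Type _ where
  R : Finset E
  Rpos : Finset E
  k : E → ℝ
  k_pos : ∀ α ∈ R, 0 < k α
  root_ne_zero : ∀ α ∈ R, α ≠ 0
  pos_subset : Rpos ⊆ R
  pos_char : ∃ u : E, ∀ α ∈ R, (α ∈ Rpos ↔ 0 < ⟪α, u⟫)
  pos_or_neg : ∀ α ∈ R, α ∈ Rpos ∨ -α ∈ Rpos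
  neg_mem : ∀ α ∈ R, -α ∈ R
  integral : ∀ α ∈ R, ∀ β ∈ R, ∃ n : ℤ, ⟪coroot α, β⟫ = (n : ℝ)
  refl_mem : ∀ α ∈ R, ∀ β ∈ R, rRefl α β ∈ R
  k_inv : ∀ α ∈ R, ∀ β ∈ R, k (rRefl α β) = k β

/-- The Weyl group: the subgroup of linear isometries generated by the root reflections. -/
def weylGroup (D : HOData E) : Subgroup (E ≃ₗᵢ[ℝ] E) :=
  Subgroup.closure {w : E ≃ₗᵢ[ℝ] E | ∃ α ∈ D.R, ∀ x, w x = rRefl α x}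

/-- `ρ = (1/2) Σ_{α ∈ R⁺} k_α α`. -/
def rhoHO (D : HOData E) : E := (2:ℝ)⁻¹ • ∑ α ∈ D.Rpos, D.k α • α

/-- Regular points. -/
def HORegular (D : HOData E) (x : E) : Prop := ∀ α ∈ D.R, ⟪α, x⟫ ≠ 0

/-- The (open) positive Weyl chamber. -/
def posChamber (D : HOData E) : Set E := {x | ∀ α ∈ D.Rpos, 0 < ⟪α, x⟫}

/-- The positive indivisible roots `R₀⁺`. -/
def Rpos0 (D : HOData E) : Finset E := D.Rpos.filter (fun α => (2:ℝ)⁻¹ • α ∉ D.R)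

/-- The Opdam function `G_λ` for a real parameter `λ`: an analytic function,
normalized at `0`, satisfying the Cherednik differential-difference system. -/
def IsOpdamR (D : HOData E) (lam : E) (G : E → ℝ) : Prop :=
  AnalyticOnNhd ℝ G Set.univ ∧ G 0 = 1 ∧
  ∀ ξ x, HORegular D x →
    fderiv ℝ G x ξ =
      (∑ α ∈ D.Rpos, D.k α * ⟪α, ξ⟫ / (1 - Real.exp (-⟪α, x⟫)) * (G (rRefl α x) - G x))
      + ⟪rhoHO D + lam, ξ⟫ * G x

/-- The Opdam function `G_λ` for a complex parameter `λ = l1 + i l2 ∈ h`. -/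
def IsOpdamC (D : HOData E) (l1 l2 : E) (G : E → ℂ) : Prop :=
  AnalyticOnNhd ℝ G Set.univ ∧ G 0 = 1 ∧
  ∀ ξ x, HORegular D x →
    fderiv ℝ G x ξ =
      (∑ α ∈ D.Rpos, ((D.k α * ⟪α, ξ⟫ / (1 - Real.exp (-⟪α, x⟫)) : ℝ) : ℂ)
          * (G (rRefl α x) - G x))
      + (((⟪rhoHO D + l1, ξ⟫ : ℝ) : ℂ) + Complex.I * ((⟪l2, ξ⟫ : ℝ) : ℂ)) * G x

/-- The symmetrization `F(x) = |W|⁻¹ Σ_{w ∈ W} G(w x)` (real valued case). -/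
def Fsym (D : HOData E) [Fintype (weylGroup D)] (G : E → ℝ) (x : E) : ℝ :=
  (Fintype.card (weylGroup D) : ℝ)⁻¹ * ∑ w : weylGroup D, G (w.1 x)

/-- The symmetrization `F(x) = |W|⁻¹ Σ_{w ∈ W} G(w x)` (complex valued case). -/
def FsymC (D : HOData E) [Fintype (weylGroup D)] (G : E → ℂ) (x : E) : ℂ :=
  (Fintype.card (weylGroup D) : ℂ)⁻¹ * ∑ w : weylGroup D, G (w.1 x)

/-- `max_{w ∈ W} (w λ, x)`. -/
def maxW (D : HOData E) [Fintype (weylGroup D)] (lam x : E) : ℝ :=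
  ⨆ w : weylGroup D, ⟪w.1 lam, x⟫

/-!
Fix a regular `x` and follow the rays `t ↦ t • w x`, `t ∈ [0, 1]`, `w ∈ W`. On them the
Cherednik system expresses `d/dt G (t • w x)` through the differences
`G (t • r_α w x) - G (t • w x)` with nonnegative coefficients, plus `⟪ρ + λ, w x⟫ G (t • w x)`.
Since `r_α w ∈ W`, at a `w` maximizing `G_λ (t • w x) - G_0 (t • w x) e^{t m}`
(`m = max_w ⟪w λ, x⟫`) all difference terms are `≤ 0`, and Gronwall's inequality for the maximum
of finitely many functions keeps this maximum `≤ 0` from `t = 0` to `t = 1`. The left-over term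
`(⟪λ, w x⟫ - m) e^{t m} G_0 (t • w x)` is `≤ 0` because `G_0 ≥ 0`, which is the same argument
applied to `-G_0` and `0`. Regular points are dense, which removes the regularity assumption.
-/

open Set Filter Topology

section MaxGronwall

variable {ι : Type*} [Fintype ι] {v v' : ι → ℝ → ℝ}

lemma eventually_slope_sup'_lt [Nonempty ι] {d : ι → ℝ} {x r : ℝ}
    (hd : ∀ i, HasDerivAt (v i) (d i) x) (hr : ∀ i, (∀ j, v j x ≤ v i x) → d i < r) :
    ∀ᶠ z in 𝓝[>] x, (z - x)⁻¹ *
      (Finset.univ.sup' Finset.univ_nonempty (v · z) -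
        Finset.univ.sup' Finset.univ_nonempty (v · x)) < r := by
  set F : ℝ → ℝ := fun t => Finset.univ.sup' Finset.univ_nonempty (v · t)
  have hle : ∀ j t, v j t ≤ F t := fun j t => Finset.le_sup' (v · t) (Finset.mem_univ j)
  have hbelow : ∀ j, ∀ᶠ z in 𝓝[>] x, v j z - F x < r * (z - x) := by
    intro j
    by_cases hj : ∀ k, v k x ≤ v j x
    · have hFj : F x = v j x := le_antisymm (Finset.sup'_le _ _ fun k _ => hj k) (hle j x)
      have hslope : Tendsto (slope (v j) x) (𝓝[>] x) (𝓝 (d j)) :=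
        (hasDerivAt_iff_tendsto_slope.1 (hd j)).mono_left
          (nhdsWithin_mono _ fun z hz => ne_of_gt hz)
      filter_upwards [hslope.eventually_lt_const (hr j hj), self_mem_nhdsWithin]
        with z hz (hxz : x < z)
      rw [slope_def_field, div_lt_iff₀ (sub_pos.2 hxz)] at hz
      linarith
    · simp only [not_forall, not_le] at hj
      obtain ⟨k, hk⟩ := hj
      have hcont : ContinuousAt (fun z => v j z - F x - r * (z - x)) x :=
        ((hd j).continuousAt.sub continuousAt_const).sub (by fun_prop)
      have hneg : v j x - F x - r * (x - x) < 0 := by linarith [hle k x]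
      filter_upwards [nhdsWithin_le_nhds (hcont.eventually_lt continuousAt_const hneg)]
        with z hz
      linarith
  filter_upwards [eventually_all.2 hbelow, self_mem_nhdsWithin] with z hz (hxz : x < z)
  obtain ⟨j, -, hj⟩ := Finset.exists_mem_eq_sup' Finset.univ_nonempty (v · z)
  rw [inv_mul_lt_iff₀ (sub_pos.2 hxz)]
  have := hz j
  change F z - F x < (z - x) * r
  linarith

lemma sup'_le_sup'_mul_exp [Nonempty ι] {K a b : ℝ} (hc : ∀ i, ContinuousOn (v i) (Icc a b))
    (hd : ∀ i, ∀ t ∈ Ioo a b, HasDerivAt (v i) (v' i t) t)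
    (hK : ∀ t ∈ Ioo a b, ∀ i, (∀ j, v j t ≤ v i t) → v' i t ≤ K * v i t) :
    ∀ t ∈ Icc a b, Finset.univ.sup' Finset.univ_nonempty (v · t) ≤
      Finset.univ.sup' Finset.univ_nonempty (v · a) * Real.exp (K * (t - a)) := by
  set F : ℝ → ℝ := fun t => Finset.univ.sup' Finset.univ_nonempty (v · t)
  have hFc : ContinuousOn F (Icc a b) :=
    ContinuousOn.finset_sup'_apply Finset.univ_nonempty fun i _ => hc i
  have from_interior : ∀ s ∈ Ioo a b, ∀ t ∈ Icc s b, F t ≤ F s * Real.exp (K * (t - s)) := by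
    intro s hs t ht
    have := le_gronwallBound_of_liminf_deriv_right_le (f' := fun t => K * F t) (K := K) (ε := 0)
      (hFc.mono (Icc_subset_Icc hs.1.le le_rfl)) ?_ le_rfl (fun _ _ => by simp) t ht
    · rwa [gronwallBound_ε0] at this
    intro y hy r hr
    have hy' : y ∈ Ioo a b := ⟨hs.1.trans_le hy.1, hy.2⟩
    refine (eventually_slope_sup'_lt (fun i => hd i y hy') fun i hi => ?_).frequently
    have hFi : F y = v i y :=
      le_antisymm (Finset.sup'_le _ _ fun j _ => hi j) (Finset.le_sup' (v · y) (Finset.mem_univ i))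
    exact (hK y hy' i hi).trans_lt (hFi ▸ hr)
  intro t ht
  rcases ht.1.eq_or_lt with rfl | hat
  · simp
  have := left_nhdsWithin_Ioo_neBot hat
  have hlim : Tendsto (fun s => F s * Real.exp (K * (t - s))) (𝓝[Ioo a t] a)
      (𝓝 (F a * Real.exp (K * (t - a)))) :=
    ((hFc a ⟨le_rfl, ht.1.trans ht.2⟩).mono (Ioo_subset_Icc_self.trans
      (Icc_subset_Icc le_rfl ht.2))).tendsto.mul
      ((by fun_prop : Continuous fun s => Real.exp (K * (t - s))).tendsto a |>.mono_left
        nhdsWithin_le_nhds)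
  exact ge_of_tendsto hlim (eventually_nhdsWithin_of_forall fun s hs =>
    from_interior s ⟨hs.1, hs.2.trans_le ht.2⟩ t ⟨hs.2.le, ht.2⟩)

/-- Adjoining the constant function `0` to the family turns the Gronwall estimate into a
maximum principle. -/
lemma nonpos_of_hasDerivAt_le_of_isMax {K a b : ℝ} (hc : ∀ i, ContinuousOn (v i) (Icc a b))
    (hd : ∀ i, ∀ t ∈ Ioo a b, HasDerivAt (v i) (v' i t) t) (ha : ∀ i, v i a ≤ 0)
    (hK : ∀ t ∈ Ioo a b, ∀ i, 0 ≤ v i t → (∀ j, v j t ≤ v i t) → v' i t ≤ K * v i t)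
    (i : ι) : ∀ t ∈ Icc a b, v i t ≤ 0 := by
  set u : Option ι → ℝ → ℝ := fun o t => o.elim 0 (v · t)
  have key := sup'_le_sup'_mul_exp (v := u) (v' := fun o t => o.elim 0 (v' · t)) (K := K)
    (a := a) (b := b)
    (fun o => by cases o <;> simp [u, continuousOn_const, hc])
    (fun o t ht => by cases o <;> simp [u, hasDerivAt_const, hd _ t ht])
    (fun t ht o ho => by
      cases o with
      | none => simp [u]
      | some j => exact hK t ht j (ho none) fun k => ho (some k))
  intro t ht
  have hstart : Finset.univ.sup' Finset.univ_nonempty (u · a) ≤ 0 :=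
    Finset.sup'_le _ _ fun o _ => by cases o <;> simp [u, ha]
  calc v i t = u (some i) t := rfl
    _ ≤ Finset.univ.sup' Finset.univ_nonempty (u · t) := Finset.le_sup' (u · t) (Finset.mem_univ _)
    _ ≤ _ := key t ht
    _ ≤ 0 := mul_nonpos_of_nonpos_of_nonneg hstart (Real.exp_pos _).le

end MaxGronwall

section RootSystem

variable {V : Type*} [NormedAddCommGroup V] [InnerProductSpace ℝ V]

lemma rRefl_smul (α : V) (t : ℝ) (x : V) : rRefl α (t • x) = t • rRefl α x := by
  simp only [rRefl, inner_smul_right, smul_sub, smul_smul]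

def rReflEquiv (α : V) : V ≃ₗᵢ[ℝ] V := Submodule.reflection (ℝ ∙ α)ᗮ

lemma rReflEquiv_apply (α x : V) : rReflEquiv α x = rRefl α x := by
  rw [rReflEquiv, Submodule.reflection_orthogonal_apply, Submodule.reflection_singleton_apply,
    rRefl, coroot, real_inner_smul_left, real_inner_self_eq_norm_sq, neg_sub, two_smul,
    ← add_smul]
  congr 2
  simp only [RCLike.ofReal_real_eq_id, id]
  ring

lemma rReflEquiv_mem_weylGroup (D : HOData V) {α : V} (hα : α ∈ D.R) :
    rReflEquiv α ∈ weylGroup D :=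
  Subgroup.subset_closure ⟨α, hα, rReflEquiv_apply α⟩

lemma rRefl_smul_apply (α : V) (t : ℝ) (w : V ≃ₗᵢ[ℝ] V) (x : V) :
    rRefl α (t • w x) = t • (rReflEquiv α * w) x := by
  rw [rRefl_smul, ← rReflEquiv_apply]
  rfl

lemma rReflEquiv_inv (α : V) : (rReflEquiv α)⁻¹ = rReflEquiv α :=
  Submodule.reflection_symm

lemma mapsTo_R_of_mem_weylGroup (D : HOData V) {w : V ≃ₗᵢ[ℝ] V} (hw : w ∈ weylGroup D) :
    ∀ α ∈ D.R, w α ∈ D.R := by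
  induction hw using Subgroup.closure_induction'' with
  | mem g hg =>
    obtain ⟨β, hβ, hgβ⟩ := hg
    exact fun α hα => hgβ α ▸ D.refl_mem β hβ α hα
  | inv_mem g hg =>
    obtain ⟨β, hβ, hgβ⟩ := hg
    obtain rfl : g = rReflEquiv β :=
      LinearIsometryEquiv.ext fun x => (hgβ x).trans (rReflEquiv_apply β x).symm
    rw [rReflEquiv_inv]
    exact fun α hα => (rReflEquiv_apply β α).symm ▸ D.refl_mem β hβ α hα
  | one => exact fun α hα => hα
  | mul g h _ _ hg hh => exact fun α hα => hg _ (hh α hα)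

lemma HORegular.smul_apply {D : HOData V} {x : V} (hx : HORegular D x) {w : V ≃ₗᵢ[ℝ] V}
    (hw : w ∈ weylGroup D) {t : ℝ} (ht : t ≠ 0) : HORegular D (t • w x) := by
  intro α hα
  rw [real_inner_smul_right, real_inner_comm, w.inner_map_eq_flip, real_inner_comm]
  exact mul_ne_zero ht (hx _ (mapsTo_R_of_mem_weylGroup D (inv_mem hw) α hα))

lemma dense_setOf_HORegular (D : HOData V) : Dense {x | HORegular D x} := by
  have hS : {x | HORegular D x} = ⋂₀ ((fun α => {x : V | ⟪α, x⟫ ≠ 0}) '' (D.R : Set V)) := by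
    ext x
    simp [HORegular]
  rw [hS]
  refine (D.R.finite_toSet.image _).dense_sInter ?_ ?_ <;> rintro _ ⟨α, hα, rfl⟩
  · exact isOpen_ne_fun (by fun_prop) continuous_const
  · have hne : innerSL ℝ α ≠ 0 := fun h =>
      D.root_ne_zero α hα (by simpa using DFunLike.congr_fun h α)
    exact (dense_compl_singleton (0 : ℝ)).preimage ((innerSL ℝ α).isOpenMap_of_ne_zero hne)

section maxW

variable (D : HOData V) [Fintype (weylGroup D)]

lemma inner_apply_le_maxW (lam x : V) (w : weylGroup D) : ⟪lam, w.1 x⟫ ≤ maxW D lam x := by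
  rw [real_inner_comm, w.1.inner_map_eq_flip, real_inner_comm]
  exact le_ciSup (f := fun v : weylGroup D => ⟪v.1 lam, x⟫) (Set.finite_range _).bddAbove w⁻¹

lemma continuous_maxW (lam : V) : Continuous (maxW D lam) := by
  have h : maxW D lam = fun x => Finset.univ.sup' Finset.univ_nonempty
      fun w : weylGroup D => ⟪w.1 lam, x⟫ := by
    ext x
    rw [Finset.sup'_univ_eq_ciSup]
    rfl
  rw [h]
  exact Continuous.finset_sup'_apply _ fun w _ => by fun_prop

end maxW

section Cherednik

def cherednikDifference (D : HOData V) (f : V → ℝ) (ξ x : V) : ℝ :=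
  ∑ α ∈ D.Rpos, D.k α * ⟪α, ξ⟫ / (1 - Real.exp (-⟪α, x⟫)) * (f (rRefl α x) - f x)

def IsCherednikSolution (D : HOData V) (lam : V) (G : V → ℝ) : Prop :=
  Differentiable ℝ G ∧ ∀ ξ x, HORegular D x →
    fderiv ℝ G x ξ = cherednikDifference D G ξ x + ⟪rhoHO D + lam, ξ⟫ * G x

variable {D : HOData V}

lemma IsOpdamR.isCherednikSolution {lam : V} {G : V → ℝ} (hG : IsOpdamR D lam G) :
    IsCherednikSolution D lam G :=
  ⟨differentiableOn_univ.1 hG.1.differentiableOn, hG.2.2⟩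

lemma cherednikDifference_neg (f : V → ℝ) (ξ x : V) :
    cherednikDifference D (fun q => -f q) ξ x = -cherednikDifference D f ξ x := by
  simp only [cherednikDifference, ← Finset.sum_neg_distrib]
  exact Finset.sum_congr rfl fun α _ => by ring

lemma cherednikDifference_sub_mul (f g : V → ℝ) (c : ℝ) (ξ x : V) :
    cherednikDifference D (fun q => f q - c * g q) ξ x =
      cherednikDifference D f ξ x - c * cherednikDifference D g ξ x := by
  simp only [cherednikDifference, Finset.mul_sum, ← Finset.sum_sub_distrib]
  exact Finset.sum_congr rfl fun α _ => by ring

lemma div_one_sub_exp_neg_mul_nonneg {s t : ℝ} (ht : 0 < t) :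
    0 ≤ s / (1 - Real.exp (-(t * s))) := by
  rcases lt_trichotomy s 0 with hs | rfl | hs
  · refine div_nonneg_of_nonpos hs.le (sub_nonpos.2 ?_)
    exact Real.one_le_exp (by nlinarith)
  · simp
  · refine div_nonneg hs.le (sub_nonneg.2 ?_)
    exact Real.exp_le_one_iff.2 (by nlinarith)

lemma cherednikDifference_smul_nonpos {f : V → ℝ} {ξ : V} {t : ℝ} (ht : 0 < t)
    (hf : ∀ α ∈ D.Rpos, f (rRefl α (t • ξ)) ≤ f (t • ξ)) :
    cherednikDifference D f ξ (t • ξ) ≤ 0 := by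
  refine Finset.sum_nonpos fun α hα => mul_nonpos_of_nonneg_of_nonpos ?_ (sub_nonpos.2 (hf α hα))
  rw [real_inner_smul_right, mul_div_assoc]
  exact mul_nonneg (D.k_pos α (D.pos_subset hα)).le (div_one_sub_exp_neg_mul_nonneg ht)

lemma isCherednikSolution_zero (lam : V) : IsCherednikSolution D lam 0 :=
  ⟨differentiable_const 0, fun ξ x _ => by simp [cherednikDifference]⟩

variable {lam mu : V} {G H : V → ℝ}

lemma IsCherednikSolution.neg (hG : IsCherednikSolution D lam G) :
    IsCherednikSolution D lam (fun q => -G q) :=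
  ⟨hG.1.neg, fun ξ x hx => by
    rw [fderiv_fun_neg, neg_apply, hG.2 ξ x hx, cherednikDifference_neg]
    ring⟩

lemma IsCherednikSolution.hasDerivAt_smul (hG : IsCherednikSolution D lam G) {ξ : V} {t : ℝ}
    (ht : HORegular D (t • ξ)) :
    HasDerivAt (fun s : ℝ => G (s • ξ))
      (cherednikDifference D G ξ (t • ξ) + ⟪rhoHO D + lam, ξ⟫ * G (t • ξ)) t := by
  rw [← hG.2 ξ _ ht]
  exact (hG.1 _).hasFDerivAt.comp_hasDerivAt t (by simpa using (hasDerivAt_id t).smul_const ξ)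

end Cherednik

section Comparison

variable {D : HOData V} {lam mu : V} {G H : V → ℝ}

lemma cherednikDeriv_sub_mul_exp_le {y : V} {t m : ℝ} (ht : 0 < t)
    (hrefl : ∀ α ∈ D.Rpos, G (rRefl α (t • y)) - Real.exp (t * m) * H (rRefl α (t • y)) ≤
      G (t • y) - Real.exp (t * m) * H (t • y))
    (hv : 0 ≤ G (t • y) - H (t • y) * Real.exp (t * m)) (hm : ⟪lam - mu, y⟫ ≤ m)
    (hH : 0 ≤ H (t • y)) :
    cherednikDifference D G y (t • y) + ⟪rhoHO D + lam, y⟫ * G (t • y) -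
        ((cherednikDifference D H y (t • y) + ⟪rhoHO D + mu, y⟫ * H (t • y)) * Real.exp (t * m) +
          H (t • y) * (Real.exp (t * m) * m)) ≤
      ‖rhoHO D + lam‖ * ‖y‖ * (G (t • y) - H (t • y) * Real.exp (t * m)) := by
  have hdiff :=
    cherednikDifference_smul_nonpos (f := fun q => G q - Real.exp (t * m) * H q) ht hrefl
  rw [cherednikDifference_sub_mul] at hdiff
  have hρ := mul_le_mul_of_nonneg_right (real_inner_le_norm (rhoHO D + lam) y) hv
  have hlam : (⟪lam - mu, y⟫ - m) * (Real.exp (t * m) * H (t • y)) ≤ 0 :=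
    mul_nonpos_of_nonpos_of_nonneg (sub_nonpos.2 hm) (mul_nonneg (Real.exp_pos _).le hH)
  have hsplit : ⟪rhoHO D + mu, y⟫ = ⟪rhoHO D + lam, y⟫ - ⟪lam - mu, y⟫ := by
    rw [inner_add_left, inner_add_left, inner_sub_left]
    ring
  rw [hsplit]
  linear_combination hdiff + hρ + hlam

variable [Fintype (weylGroup D)]

theorem IsCherednikSolution.apply_smul_le_mul_exp (hG : IsCherednikSolution D lam G)
    (hH : IsCherednikSolution D mu H) {x : V} (hx : HORegular D x) {m : ℝ}
    (hm : ∀ w : weylGroup D, ⟪lam - mu, w.1 x⟫ ≤ m)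
    (hH0 : ∀ w : weylGroup D, ∀ t ∈ Icc (0 : ℝ) 1, 0 ≤ H (t • w.1 x)) (h0 : G 0 ≤ H 0)
    (w : weylGroup D) : ∀ t ∈ Icc (0 : ℝ) 1, G (t • w.1 x) ≤ H (t • w.1 x) * Real.exp (t * m) := by
  set v : weylGroup D → ℝ → ℝ := fun w t => G (t • w.1 x) - H (t • w.1 x) * Real.exp (t * m)
  have hreg : ∀ w : weylGroup D, ∀ t ∈ Ioo (0 : ℝ) 1, HORegular D (t • w.1 x) :=
    fun w t ht => hx.smul_apply w.2 ht.1.ne'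
  have hGc := hG.1.continuous
  have hHc := hH.1.continuous
  have key := nonpos_of_hasDerivAt_le_of_isMax (v := v) (K := ‖rhoHO D + lam‖ * ‖x‖)
    (fun w => by fun_prop)
    (fun w t ht => (hG.hasDerivAt_smul (hreg w t ht)).sub ((hH.hasDerivAt_smul (hreg w t ht)).mul
      (by simpa using ((hasDerivAt_id t).mul_const m).exp)))
    (fun w => by simp [v, h0])
    (fun t ht w hv hmax => by
      rw [← w.1.norm_map x]
      refine cherednikDeriv_sub_mul_exp_le ht.1 (fun α hα => ?_) hv (hm w)
        (hH0 w t (Ioo_subset_Icc_self ht))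
      have := hmax ⟨_, mul_mem (rReflEquiv_mem_weylGroup D (D.pos_subset hα)) w.2⟩
      rw [rRefl_smul_apply]
      simp only [v] at this
      linarith)
    w
  exact fun t ht => sub_nonpos.1 (key t ht)

lemma IsCherednikSolution.apply_smul_nonneg (hG : IsCherednikSolution D mu G) (hG0 : 0 ≤ G 0)
    {x : V} (hx : HORegular D x) (w : weylGroup D) : ∀ t ∈ Icc (0 : ℝ) 1, 0 ≤ G (t • w.1 x) := by
  intro t ht
  simpa using hG.neg.apply_smul_le_mul_exp (isCherednikSolution_zero mu) hx (m := 0)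
    (fun _ => by simp) (fun _ _ _ => le_rfl) (by simpa using hG0) w t ht

theorem IsCherednikSolution.le_mul_exp_maxW (hG : IsCherednikSolution D lam G)
    (hH : IsCherednikSolution D mu H) (hH0 : 0 ≤ H 0) (h0 : G 0 ≤ H 0) (x : V) :
    G x ≤ H x * Real.exp (maxW D (lam - mu) x) := by
  refine (dense_setOf_HORegular D).induction (fun x hx => ?_)
    (isClosed_le hG.1.continuous
      (hH.1.continuous.mul (Real.continuous_exp.comp (continuous_maxW D _)))) x
  simpa using hG.apply_smul_le_mul_exp hH hx (inner_apply_le_maxW D (lam - mu) x)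
    (hH.apply_smul_nonneg hH0 hx) h0 1 1 ⟨zero_le_one, le_rfl⟩

end Comparison

end RootSystem

/-- for every `λ ∈ a` and every `x ∈ a`,
`G_λ(x) ≤ G_0(x) · exp (max_{w ∈ W} (wλ, x))`. -/
theorem statement2 (D : HOData E) [Fintype (weylGroup D)] (lam : E) (G Gzero : E → ℝ)
    (hG : IsOpdamR D lam G) (hG0 : IsOpdamR D 0 Gzero) :
    ∀ x : E, G x ≤ Gzero x * Real.exp (maxW D lam x) := by
  intro x
  simpa using hG.isCherednikSolution.le_mul_exp_maxW hG0.isCherednikSolution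
    (hG0.2.1 ▸ zero_le_one) (by rw [hG.2.1, hG0.2.1]) x
end
end

section
/- Let w ∈ W and let α ∈ wΠ (the image of a simple root under w). If there exists β ∈ R₀⁺ ∩ wR⁺ such that α ≤_w β, then there exists γ ∈ Π ∩ wR⁺ such that α ≤_w γ. -/
/-!
Among the roots `δ ∈ R⁺` with `w⁻¹δ ∈ R⁺` and `w⁻¹(δ - α) ∈ Q⁺` (`β` is one), induct on the
height. A non-simple such `δ` is a sum `δ₁ + δ₂` of positive roots, and one summand again
qualifies. If `w⁻¹δ₁` is negative, then `w⁻¹δ₂ = w⁻¹δ + (-w⁻¹δ₁)` is positive and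
`w⁻¹(δ₂ - α) = w⁻¹(δ - α) + (-w⁻¹δ₁) ∈ Q⁺`. If both `w⁻¹δᵢ` are positive, use that `Q⁺` is the
monoid generated by `Π` and that `Π` is linearly independent (its elements are pairwise obtuse and
lie in an open half-space): the coefficient of the simple root `w⁻¹α` in `w⁻¹δ₁ + w⁻¹δ₂` is
positive, hence positive in one of the summands.
-/

open scoped BigOperators RealInnerProductSpace Classical

noncomputable section

variable {E : Type*} [NormedAddCommGroup E] [InnerProductSpace ℝ E] [FiniteDimensional ℝ E]

/-- `Π` is the set of simple roots: indecomposable positive roots. -/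
def IsSimpleSet (D : HOData E) (Pi : Finset E) : Prop :=
  ∀ α, α ∈ Pi ↔ α ∈ D.Rpos ∧ ∀ β ∈ D.Rpos, ∀ γ ∈ D.Rpos, α ≠ β + γ

/-- The positive lattice `Q⁺`: the ℕ-span of the positive roots. -/
def Qpos (D : HOData E) : Set E := {q | ∃ c : E → ℕ, q = ∑ α ∈ D.Rpos, (c α : ℝ) • α}

/-- `q' ≤_w q` iff `q' ∈ wQ⁺` and `q - q' ∈ wQ⁺`. -/
def leW (D : HOData E) (w : weylGroup D) (q' q : E) : Prop :=
  w.1.symm q' ∈ Qpos D ∧ w.1.symm (q - q') ∈ Qpos D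

theorem exists_nat_sum_eq_iff_mem_closure {R V : Type*} [Semiring R] [AddCommMonoid V]
    [Module R V] {s : Finset V} {q : V} :
    (∃ c : V → ℕ, q = ∑ a ∈ s, (c a : R) • a) ↔ q ∈ AddSubmonoid.closure (s : Set V) := by
  simp only [Nat.cast_smul_eq_nsmul]
  constructor
  · rintro ⟨c, rfl⟩
    exact sum_mem fun a ha => nsmul_mem (AddSubmonoid.subset_closure ha) _
  · intro hq
    obtain ⟨c, -, hc⟩ := AddSubmonoid.mem_closure_finset.1 hq
    exact ⟨c, hc.symm⟩

theorem exists_nsmul_add_of_mem_closure_insert {M : Type*} [AddCommMonoid M] {a x : M} {s : Set M}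
    (hx : x ∈ AddSubmonoid.closure (insert a s)) :
    ∃ k : ℕ, ∃ y ∈ AddSubmonoid.closure s, x = k • a + y := by
  rw [Set.insert_eq, AddSubmonoid.closure_union, AddSubmonoid.mem_sup] at hx
  obtain ⟨_, hka, y, hy, rfl⟩ := hx
  obtain ⟨k, rfl⟩ := AddSubmonoid.mem_closure_singleton.1 hka
  exact ⟨k, y, hy, rfl⟩

/-- In the monoid generated by `a` and `s`, with `a` outside the span of `s`, the coefficient of
`a` is well defined; it is additive, so one of two summands has a positive `a`-coefficient. -/
theorem sub_mem_closure_insert_or {V : Type*} [AddCommGroup V] [Module ℝ V] {a x₁ x₂ : V}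
    {s : Set V} (ha : a ∉ Submodule.span ℝ s)
    (h₁ : x₁ ∈ AddSubmonoid.closure (insert a s)) (h₂ : x₂ ∈ AddSubmonoid.closure (insert a s))
    (h : x₁ + x₂ - a ∈ AddSubmonoid.closure (insert a s)) :
    x₁ - a ∈ AddSubmonoid.closure (insert a s) ∨ x₂ - a ∈ AddSubmonoid.closure (insert a s) := by
  obtain ⟨k₁, y₁, hy₁, rfl⟩ := exists_nsmul_add_of_mem_closure_insert h₁
  obtain ⟨k₂, y₂, hy₂, rfl⟩ := exists_nsmul_add_of_mem_closure_insert h₂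
  obtain ⟨k, y, hy, hk⟩ := exists_nsmul_add_of_mem_closure_insert h
  have hspan : ∀ z ∈ AddSubmonoid.closure s, z ∈ Submodule.span ℝ s :=
    fun z hz => AddSubmonoid.closure_le.2 Submodule.subset_span hz
  have hcoeff : k₁ + k₂ = k + 1 := by
    by_contra hne
    have hne' : ((k₁ + k₂ : ℕ) : ℝ) - (k + 1 : ℕ) ≠ 0 := sub_ne_zero.2 (Nat.cast_injective.ne hne)
    refine ha (((Submodule.span ℝ s).smul_mem_iff hne').1 ?_)
    have : (((k₁ + k₂ : ℕ) : ℝ) - (k + 1 : ℕ)) • a = y - y₁ - y₂ := by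
      simp only [← Nat.cast_smul_eq_nsmul ℝ] at hk
      push_cast
      linear_combination (norm := module) hk
    rw [this]
    exact sub_mem (sub_mem (hspan y hy) (hspan y₁ hy₁)) (hspan y₂ hy₂)
  have hsub : ∀ j, ∀ z ∈ AddSubmonoid.closure s,
      (j + 1) • a + z - a ∈ AddSubmonoid.closure (insert a s) := by
    intro j z hz
    rw [succ_nsmul, add_right_comm, add_sub_cancel_right]
    exact add_mem (nsmul_mem (AddSubmonoid.subset_closure (Set.mem_insert a s)) j)
      (AddSubmonoid.closure_mono (Set.subset_insert a s) hz)
  rcases k₁ with _ | j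
  · obtain rfl : k₂ = k + 1 := by omega
    exact .inr (hsub k y₂ hy₂)
  · exact .inl (hsub j y₁ hy₁)

section

omit [FiniteDimensional ℝ E]

theorem nonpos_of_sum_smul_eq_zero_of_inner_nonpos {s : Finset E} {u : E}
    (hu : ∀ x ∈ s, 0 < ⟪x, u⟫) (hs : ∀ x ∈ s, ∀ y ∈ s, x ≠ y → ⟪x, y⟫ ≤ 0) {c : E → ℝ}
    (hc : ∑ x ∈ s, c x • x = 0) : ∀ x ∈ s, c x ≤ 0 := by
  set v := ∑ x ∈ s.filter (0 < c ·), c x • x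
  have hv : v = -∑ y ∈ s.filter (¬ 0 < c ·), c y • y := by
    rw [eq_neg_iff_add_eq_zero, Finset.sum_filter_add_sum_filter_not, hc]
  have hvv : ⟪v, v⟫ ≤ 0 := by
    nth_rw 2 [hv]
    rw [inner_neg_right, sum_inner, neg_nonpos]
    refine Finset.sum_nonneg fun x hx => ?_
    rw [inner_sum]
    refine Finset.sum_nonneg fun y hy => ?_
    rw [Finset.mem_filter] at hx hy
    rw [real_inner_smul_left, real_inner_smul_right, ← mul_assoc]
    exact mul_nonneg_of_nonpos_of_nonpos
      (mul_nonpos_of_nonneg_of_nonpos hx.2.le (not_lt.1 hy.2))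
      (hs x hx.1 y hy.1 fun hxy => hy.2 (hxy ▸ hx.2))
  have hv0 : v = 0 := real_inner_self_nonpos.1 hvv
  intro x hx
  by_contra! hcx
  have : 0 < ⟪v, u⟫ := by
    rw [sum_inner]
    refine Finset.sum_pos' (fun y hy => ?_) ⟨x, Finset.mem_filter.2 ⟨hx, hcx⟩, ?_⟩
    · rw [Finset.mem_filter] at hy
      rw [real_inner_smul_left]
      exact mul_nonneg hy.2.le (hu y hy.1).le
    · rw [real_inner_smul_left]
      exact mul_pos hcx (hu x hx)
  simp [hv0] at this

theorem linearIndepOn_of_inner_nonpos {s : Finset E} {u : E} (hu : ∀ x ∈ s, 0 < ⟪x, u⟫)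
    (hs : ∀ x ∈ s, ∀ y ∈ s, x ≠ y → ⟪x, y⟫ ≤ 0) : LinearIndepOn ℝ id (s : Set E) := by
  rw [linearIndepOn_finset_iff]
  intro c hc x hx
  have hc' : ∑ x ∈ s, (-c) x • id x = 0 := by simpa [neg_smul, Finset.sum_neg_distrib] using hc
  exact le_antisymm (nonpos_of_sum_smul_eq_zero_of_inner_nonpos hu hs hc x hx)
    (neg_nonpos.1 (nonpos_of_sum_smul_eq_zero_of_inner_nonpos hu hs hc' x hx))

theorem inner_coroot (α β : E) : ⟪coroot α, β⟫ = 2 / ⟪α, α⟫ * ⟪α, β⟫ :=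
  real_inner_smul_left _ _ _

theorem rRefl_rRefl {α : E} (hα : α ≠ 0) (x : E) : rRefl α (rRefl α x) = x := by
  have h2 : ⟪coroot α, α⟫ = 2 := by
    rw [inner_coroot, div_mul_cancel₀ _ (inner_self_ne_zero.2 hα)]
  simp only [rRefl, inner_sub_right, real_inner_smul_right, h2]
  module

namespace HOData

variable (D : HOData E)

theorem apply_mem_R {g : E ≃ₗᵢ[ℝ] E} (hg : g ∈ weylGroup D) {x : E} (hx : x ∈ D.R) :
    g x ∈ D.R := by
  induction hg using Subgroup.closure_induction'' generalizing x with
  | mem g hg =>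
    obtain ⟨α, hα, hgα⟩ := hg
    exact hgα x ▸ D.refl_mem α hα x hx
  | inv_mem g hg =>
    obtain ⟨α, hα, hgα⟩ := hg
    have : g⁻¹ x = rRefl α x :=
      g.symm_apply_eq.2 (by rw [hgα, rRefl_rRefl (D.root_ne_zero α hα)])
    exact this ▸ D.refl_mem α hα x hx
  | one => exact hx
  | mul g h _ _ ihg ihh => exact ihg (ihh hx)

theorem symm_apply_mem_R (w : weylGroup D) {x : E} (hx : x ∈ D.R) : w.1.symm x ∈ D.R :=
  D.apply_mem_R (inv_mem w.2) hx

theorem inner_coroot_eq_one_or_two_le {α β : E} (hα : α ∈ D.R) (hβ : β ∈ D.R)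
    (h : 0 < ⟪α, β⟫) : ⟪coroot α, β⟫ = 1 ∨ 2 ≤ ⟪coroot α, β⟫ := by
  obtain ⟨n, hn⟩ := D.integral α hα β hβ
  have hpos : 0 < ⟪coroot α, β⟫ := by
    rw [inner_coroot]
    exact mul_pos (div_pos two_pos (real_inner_self_pos.2 (D.root_ne_zero α hα))) h
  rw [hn] at hpos ⊢
  have : 0 < n := by exact_mod_cast hpos
  rcases (by omega : n = 1 ∨ 2 ≤ n) with rfl | h2
  · exact .inl Int.cast_one
  · exact .inr (by exact_mod_cast h2)

/-- Otherwise both Cartan integers are at least `2`, which forces `|α - β|² ≤ 0`. -/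
theorem inner_coroot_eq_one_of_inner_pos {α β : E} (hα : α ∈ D.R) (hβ : β ∈ D.R) (hne : α ≠ β)
    (h : 0 < ⟪α, β⟫) : ⟪coroot α, β⟫ = 1 ∨ ⟪coroot β, α⟫ = 1 := by
  have le_of_two_le : ∀ {x y : E}, x ∈ D.R → 2 ≤ ⟪coroot x, y⟫ → ⟪x, x⟫ ≤ ⟪x, y⟫ := by
    intro x y hx h2
    have hxx := real_inner_self_pos.2 (D.root_ne_zero x hx)
    rw [inner_coroot, div_mul_eq_mul_div, le_div_iff₀ hxx] at h2
    linarith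
  rcases D.inner_coroot_eq_one_or_two_le hα hβ h with h₁ | h₁
  · exact .inl h₁
  rcases D.inner_coroot_eq_one_or_two_le hβ hα (real_inner_comm α β ▸ h) with h₂ | h₂
  · exact .inr h₂
  have := le_of_two_le hα h₁
  have := le_of_two_le hβ h₂
  refine absurd (sub_eq_zero.1 (real_inner_self_nonpos.1 ?_)) hne
  rw [real_inner_sub_sub_self]
  linarith [real_inner_comm α β]

theorem sub_mem_R_of_inner_pos {α β : E} (hα : α ∈ D.R) (hβ : β ∈ D.R) (hne : α ≠ β)
    (h : 0 < ⟪α, β⟫) : α - β ∈ D.R := by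
  rcases D.inner_coroot_eq_one_of_inner_pos hα hβ hne h with h₁ | h₁
  · have : rRefl α β = -(α - β) := by rw [rRefl, h₁, one_smul, neg_sub]
    simpa [this] using D.neg_mem _ (D.refl_mem α hα β hβ)
  · have : rRefl β α = α - β := by rw [rRefl, h₁, one_smul]
    exact this ▸ D.refl_mem β hβ α hα

theorem mem_Qpos_iff {q : E} : q ∈ Qpos D ↔ q ∈ AddSubmonoid.closure (D.Rpos : Set E) :=
  exists_nat_sum_eq_iff_mem_closure

theorem right_mem_Rpos_of_left_notMem_Rpos {x₁ x₂ q : E} (h₁ : x₁ ∈ D.R) (hn : x₁ ∉ D.Rpos)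
    (h₂ : x₂ ∈ D.R) (h : x₁ + x₂ ∈ D.Rpos) (hq : x₁ + x₂ - q ∈ Qpos D) :
    x₂ ∈ D.Rpos ∧ x₂ - q ∈ Qpos D := by
  obtain ⟨u, hu⟩ := D.pos_char
  have hneg : -x₁ ∈ D.Rpos := (D.pos_or_neg x₁ h₁).resolve_left hn
  have hsum := (hu _ (D.pos_subset h)).1 h
  have hneg' := (hu _ (D.pos_subset hneg)).1 hneg
  rw [inner_add_left] at hsum
  rw [inner_neg_left] at hneg'
  refine ⟨(hu x₂ h₂).2 (by linarith), ?_⟩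
  rw [show x₂ - q = (x₁ + x₂ - q) + -x₁ by abel, mem_Qpos_iff]
  exact add_mem ((mem_Qpos_iff D).1 hq) (AddSubmonoid.subset_closure hneg)

end HOData

namespace IsSimpleSet

variable {D : HOData E} {Pi : Finset E} (hPi : IsSimpleSet D Pi)
include hPi

theorem subset_Rpos : Pi ⊆ D.Rpos := fun a ha => ((hPi a).1 ha).1

theorem inner_nonpos {a b : E} (ha : a ∈ Pi) (hb : b ∈ Pi) (hne : a ≠ b) : ⟪a, b⟫ ≤ 0 := by
  by_contra! h
  obtain ⟨haR, ha'⟩ := (hPi a).1 ha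
  obtain ⟨hbR, hb'⟩ := (hPi b).1 hb
  rcases D.pos_or_neg _ (D.sub_mem_R_of_inner_pos (D.pos_subset haR) (D.pos_subset hbR) hne h)
    with hpos | hneg
  · exact ha' b hbR _ hpos (add_sub_cancel b a).symm
  · exact hb' a haR _ (by rwa [neg_sub] at hneg) (add_sub_cancel a b).symm

theorem linearIndepOn : LinearIndepOn ℝ id (Pi : Set E) := by
  obtain ⟨u, hu⟩ := D.pos_char
  exact linearIndepOn_of_inner_nonpos
    (fun a ha => (hu a (D.pos_subset (hPi.subset_Rpos ha))).1 (hPi.subset_Rpos ha))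
    (fun _ ha _ hb => hPi.inner_nonpos ha hb)

theorem notMem_span_erase {a : E} (ha : a ∈ Pi) : a ∉ Submodule.span ℝ (Pi.erase a : Set E) := by
  have := hPi.linearIndepOn
  rw [← Finset.insert_erase ha, Finset.coe_insert, linearIndepOn_insert (by simp)] at this
  simpa using this.2

/-- Induction on the height `⟪β, u⟫`, for `u` as in `D.pos_char`. -/
theorem induction {p : E → Prop} (simple : ∀ π ∈ Pi, p π)
    (add : ∀ β₁ ∈ D.Rpos, ∀ β₂ ∈ D.Rpos, p β₁ → p β₂ → p (β₁ + β₂)) : ∀ β ∈ D.Rpos, p β := by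
  obtain ⟨u, hu⟩ := D.pos_char
  have hpos : ∀ β ∈ D.Rpos, 0 < ⟪β, u⟫ := fun β hβ => (hu β (D.pos_subset hβ)).1 hβ
  by_contra! h
  obtain ⟨β, hβ, hmin⟩ := (D.Rpos.filter (¬ p ·)).exists_min_image (⟪·, u⟫)
    (by simpa [Finset.Nonempty] using h)
  rw [Finset.mem_filter] at hβ
  obtain ⟨β₁, h₁, β₂, h₂, rfl⟩ : ∃ β₁ ∈ D.Rpos, ∃ β₂ ∈ D.Rpos, β = β₁ + β₂ := by
    by_contra! hind
    exact hβ.2 (simple β ((hPi β).2 ⟨hβ.1, hind⟩))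
  have below : ∀ γ ∈ D.Rpos, ⟪γ, u⟫ < ⟪β₁ + β₂, u⟫ → p γ := fun γ hγ hlt =>
    by_contra fun hp => (hmin γ (Finset.mem_filter.2 ⟨hγ, hp⟩)).not_gt hlt
  have h₁₂ := inner_add_left (𝕜 := ℝ) β₁ β₂ u
  exact hβ.2 (add β₁ h₁ β₂ h₂ (below β₁ h₁ (by linarith [hpos β₂ h₂]))
    (below β₂ h₂ (by linarith [hpos β₁ h₁])))

theorem closure_eq : AddSubmonoid.closure (Pi : Set E) = AddSubmonoid.closure (D.Rpos : Set E) :=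
  le_antisymm (AddSubmonoid.closure_mono hPi.subset_Rpos) <| AddSubmonoid.closure_le.2 <|
    hPi.induction (fun _ h => AddSubmonoid.subset_closure h) (fun _ _ _ _ => add_mem)

theorem exists_summand_mem_Rpos_sub_mem_Qpos {a x₁ x₂ : E} (ha : a ∈ Pi) (h₁ : x₁ ∈ D.R)
    (h₂ : x₂ ∈ D.R) (h : x₁ + x₂ ∈ D.Rpos) (hq : x₁ + x₂ - a ∈ Qpos D) :
    (x₁ ∈ D.Rpos ∧ x₁ - a ∈ Qpos D) ∨ (x₂ ∈ D.Rpos ∧ x₂ - a ∈ Qpos D) := by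
  by_cases hx₁ : x₁ ∈ D.Rpos
  · by_cases hx₂ : x₂ ∈ D.Rpos
    · simp only [HOData.mem_Qpos_iff, ← hPi.closure_eq] at hq ⊢
      have hmem : ∀ x ∈ D.Rpos, x ∈ AddSubmonoid.closure (Pi : Set E) := fun x hx =>
        hPi.closure_eq ▸ AddSubmonoid.subset_closure hx
      rw [← Finset.insert_erase ha, Finset.coe_insert] at hq hmem ⊢
      exact (sub_mem_closure_insert_or (hPi.notMem_span_erase ha) (hmem x₁ hx₁) (hmem x₂ hx₂)
        hq).imp (⟨hx₁, ·⟩) (⟨hx₂, ·⟩)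
    · rw [add_comm] at h hq
      exact .inl (D.right_mem_Rpos_of_left_notMem_Rpos h₂ hx₂ h₁ h hq)
  · exact .inr (D.right_mem_Rpos_of_left_notMem_Rpos h₁ hx₁ h₂ h hq)

end IsSimpleSet

end

/-- let `α ∈ wΠ`.  If some `β ∈ R₀⁺ ∩ wR⁺` satisfies `α ≤_w β`,
then some `γ ∈ Π ∩ wR⁺` satisfies `α ≤_w γ`. -/
theorem statement14 (D : HOData E) (Pi : Finset E) (hPi : IsSimpleSet D Pi)
    (w : weylGroup D) (α : E) (hα : w.1.symm α ∈ Pi)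
    (hβ : ∃ β, β ∈ Rpos0 D ∧ w.1.symm β ∈ D.Rpos ∧ leW D w α β) :
    ∃ γ, γ ∈ Pi ∧ w.1.symm γ ∈ D.Rpos ∧ leW D w α γ := by
  obtain ⟨β, hβ, hwβ, hαQ, hβα⟩ := hβ
  suffices ∀ δ ∈ D.Rpos, w.1.symm δ ∈ D.Rpos → w.1.symm (δ - α) ∈ Qpos D →
      ∃ γ, γ ∈ Pi ∧ w.1.symm γ ∈ D.Rpos ∧ leW D w α γ from
    this β (Finset.mem_filter.1 hβ).1 hwβ hβα
  refine hPi.induction (fun γ hγ hwγ hγα => ⟨γ, hγ, hwγ, hαQ, hγα⟩) ?_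
  intro δ₁ hδ₁ δ₂ hδ₂ ih₁ ih₂ hwδ hδα
  rw [map_add] at hwδ
  rw [map_sub, map_add] at hδα
  rcases hPi.exists_summand_mem_Rpos_sub_mem_Qpos hα (D.symm_apply_mem_R w (D.pos_subset hδ₁))
    (D.symm_apply_mem_R w (D.pos_subset hδ₂)) hwδ hδα with ⟨hw₁, hq₁⟩ | ⟨hw₂, hq₂⟩
  · exact ih₁ hw₁ (by rwa [map_sub])
  · exact ih₂ hw₂ (by rwa [map_sub])
end
end
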